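/- arXiv:1309.5759 — 4 statements merged into one kernel-verified Lean document; each statement's English description precedes it below -/
import Mathlib

section
/- Let u, v, a, b be four distinct points of the Euclidean plane ℝ², let r > 0, and suppose ‖u − v‖ ≤ r and ‖a − b‖ ≤ r. If the closed line segments [u, v] and [a, b] have a common point, then at least one of the distances ‖u − a‖, ‖u − b‖, ‖v − a‖, ‖v − b‖ is at most r. (Equivalently: in a geometric graph with parameter r, if two edges not sharing endpoints cross as segments, then at least one of the four edges joining an endpoint of one to an endpoint of the other is also present.) -/
/-! A common point `p` of the two segments lies within `r / 2` of an endpoint of each of them,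
since it splits each segment into two parts of total length at most `r`. The triangle inequality
through `p` then bounds the distance between these two endpoints by `r`. -/

theorem dist_le_half_or_dist_le_half_of_mem_segment {E : Type*} [SeminormedAddCommGroup E]
    [NormedSpace ℝ E] {x y p : E} (hp : p ∈ segment ℝ x y) :
    dist x p ≤ dist x y / 2 ∨ dist y p ≤ dist x y / 2 := by
  have hsplit : dist x p + dist p y = dist x y := dist_add_dist_of_mem_segment hp
  by_contra! h
  rw [dist_comm y p] at h
  linarith [h.1, h.2]

theorem crossing_edges_geometric_graph_general
    (u v a b : EuclideanSpace ℝ (Fin 2)) (r : ℝ)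
    (huvr : dist u v ≤ r) (habr : dist a b ≤ r)
    (hcross : (segment ℝ u v ∩ segment ℝ a b).Nonempty) :
    dist u a ≤ r ∨ dist u b ≤ r ∨ dist v a ≤ r ∨ dist v b ≤ r := by
  obtain ⟨p, hpuv, hpab⟩ := hcross
  have close_through_p {x y : EuclideanSpace ℝ (Fin 2)} (hx : dist x p ≤ r / 2)
      (hy : dist y p ≤ r / 2) : dist x y ≤ r :=
    (dist_triangle_right x y p).trans (by linarith)
  have hend_uv := dist_le_half_or_dist_le_half_of_mem_segment hpuv
  have hend_ab := dist_le_half_or_dist_le_half_of_mem_segment hpab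
  rcases hend_uv with hu | hv <;> rcases hend_ab with ha | hb
  · exact .inl (close_through_p (by linarith) (by linarith))
  · exact .inr (.inl (close_through_p (by linarith) (by linarith)))
  · exact .inr (.inr (.inl (close_through_p (by linarith) (by linarith))))
  · exact .inr (.inr (.inr (close_through_p (by linarith) (by linarith))))

/-- Let `u, v, a, b` be four distinct points of the Euclidean
plane, `r > 0`, with `‖u − v‖ ≤ r` and `‖a − b‖ ≤ r`.  If the closed segments
`[u, v]` and `[a, b]` have a common point, then one of the distances
`‖u − a‖, ‖u − b‖, ‖v − a‖, ‖v − b‖` is at most `r`. -/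
theorem crossing_edges_geometric_graph
    (u v a b : EuclideanSpace ℝ (Fin 2)) (r : ℝ) (hr : 0 < r)
    (huv : u ≠ v) (hab : a ≠ b) (hua : u ≠ a) (hub : u ≠ b) (hva : v ≠ a) (hvb : v ≠ b)
    (huvr : dist u v ≤ r) (habr : dist a b ≤ r)
    (hcross : (segment ℝ u v ∩ segment ℝ a b).Nonempty) :
    dist u a ≤ r ∨ dist u b ≤ r ∨ dist v a ≤ r ∨ dist v b ≤ r :=
  crossing_edges_geometric_graph_general u v a b r huvr habr hcross
end

section
/- Let r > 0 and let x, y ∈ ℝ² with d := ‖x − y‖ ≤ 2r. Then d r ≤ area(B(x; r) \ B(y; r)) ≤ 4 d r. -/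
open Metric Real MeasureTheory Set

/-! An isometry of the plane (a translation composed with a reflection) carries `(x, y)` to
`((0, d), 0)`, so it suffices to treat the crescent `B((0, d); r) \ B(0; r)`. Writing
`f s = √(r² - s²)`, it lies above `[-r, r]` in the strip between the graphs of `f` and `f + 2d`,
and it contains the region between `max (f s) (d - f s)` and `d + f s`. Over `|s| ≤ r/√2` the
slices of the latter have length `min d (2 f s) ≥ d/√2`, which gives `d r`. -/

theorem volume_closedBall_diff_closedBall_congr {E : Type*} [NormedAddCommGroup E]
    [InnerProductSpace ℝ E] [FiniteDimensional ℝ E] [MeasurableSpace E] [BorelSpace E]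
    {x y x' y' : E} (h : dist x y = dist x' y') (r : ℝ) :
    volume (closedBall x r \ closedBall y r) = volume (closedBall x' r \ closedBall y' r) := by
  set R := (ℝ ∙ ((x - y) - (x' - y')))ᗮ.reflection
  have hR : R (x - y) = x' - y' :=
    Submodule.reflection_sub (by rwa [← dist_eq_norm, ← dist_eq_norm])
  set φ : E → E := fun p => R (p - y) + y'
  have hφ : MeasurePreserving φ :=
    (measurePreserving_add_right volume y').comp
      (R.measurePreserving.comp (measurePreserving_sub_right volume y))
  have hφi : Isometry φ :=
    (isometry_add_right y').comp (R.isometry.comp (IsometryEquiv.subRight y).isometry)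
  have hx : φ x = x' := by simp only [φ, hR, sub_add_cancel]
  have hy : φ y = y' := by simp only [φ, sub_self, map_zero, zero_add]
  rw [← hx, ← hy, ← hφi.preimage_closedBall x r, ← hφi.preimage_closedBall y r,
    ← preimage_sdiff, hφ.measure_preimage
      (measurableSet_closedBall.diff measurableSet_closedBall).nullMeasurableSet]

def crescent (d r : ℝ) : Set (ℝ × ℝ) :=
  {q | q.1 ^ 2 + (q.2 - d) ^ 2 ≤ r ^ 2 ∧ r ^ 2 < q.1 ^ 2 + q.2 ^ 2}

theorem measurableSet_crescent (d r : ℝ) : MeasurableSet (crescent d r) := by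
  simp only [crescent, ofPred_and]
  exact (measurableSet_le (by fun_prop) (by fun_prop)).inter
    (measurableSet_lt (by fun_prop) (by fun_prop))

theorem closedBall_diff_closedBall_zero_eq_preimage_crescent {r : ℝ} (hr : 0 ≤ r) (d : ℝ) :
    closedBall !₂[0, d] r \ closedBall 0 r =
      (fun p : EuclideanSpace ℝ (Fin 2) => (p 0, p 1)) ⁻¹' crescent d r := by
  ext p
  simp [crescent, EuclideanSpace.dist_eq, EuclideanSpace.norm_eq, Fin.sum_univ_two,
    sqrt_le_left hr, Real.dist_eq, sq_abs]

theorem volume_closedBall_diff_closedBall_zero_eq_volume_crescent {r : ℝ} (hr : 0 ≤ r)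
    (d : ℝ) :
    volume (closedBall !₂[0, d] r \ closedBall 0 r) = volume (crescent d r) := by
  have hcoord : MeasurePreserving (fun p : EuclideanSpace ℝ (Fin 2) => (p 0, p 1)) :=
    (volume_preserving_finTwoArrow ℝ).comp
      (EuclideanSpace.volume_preserving_symm_measurableEquiv_toLp (Fin 2))
  rw [closedBall_diff_closedBall_zero_eq_preimage_crescent hr,
    hcoord.measure_preimage (measurableSet_crescent d r).nullMeasurableSet]

theorem crescent_subset_regionBetween {d r : ℝ} (hd : 0 ≤ d) (hr : 0 ≤ r) :
    crescent d r ⊆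
      regionBetween (fun s => √(r ^ 2 - s ^ 2)) (fun s => √(r ^ 2 - s ^ 2) + 2 * d)
        (Icc (-r) r) := by
  rintro ⟨s, t⟩ ⟨hin, hout⟩
  dsimp only at hin hout
  have hs : s ^ 2 ≤ r ^ 2 := by nlinarith
  have hsq : √(r ^ 2 - s ^ 2) ^ 2 = r ^ 2 - s ^ 2 := sq_sqrt (by linarith)
  obtain ⟨hdt, htd⟩ := abs_le.mp (abs_le_sqrt (by linarith : (t - d) ^ 2 ≤ r ^ 2 - s ^ 2))
  have hlow : √(r ^ 2 - s ^ 2) < t := by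
    by_contra! h
    nlinarith [mul_nonneg (sub_nonneg.2 h) (by linarith : 0 ≤ √(r ^ 2 - s ^ 2) + t)]
  exact ⟨abs_le_of_sq_le_sq' hs hr, hlow, by dsimp only; linarith⟩

theorem volume_crescent_le {d r : ℝ} (hd : 0 ≤ d) (hr : 0 ≤ r) :
    volume (crescent d r) ≤ ENNReal.ofReal (4 * d * r) := by
  set f : ℝ → ℝ := fun s => √(r ^ 2 - s ^ 2)
  calc volume (crescent d r)
      ≤ volume (regionBetween f (fun s => f s + 2 * d) (Icc (-r) r)) :=
        measure_mono (crescent_subset_regionBetween hd hr)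
    _ = ENNReal.ofReal (∫ _ in Icc (-r) r, 2 * d) := by
        rw [Measure.volume_eq_prod, volume_regionBetween_eq_integral
          (Continuous.integrableOn_Icc (by fun_prop)) (Continuous.integrableOn_Icc (by fun_prop))
          measurableSet_Icc fun s _ => by linarith]
        simp
    _ = ENNReal.ofReal (4 * d * r) := by
        rw [setIntegral_const, volume_real_Icc_of_le (by linarith), smul_eq_mul]
        congr 1
        ring

theorem regionBetween_subset_crescent (d : ℝ) {r c : ℝ} (hc : c ≤ r) :
    regionBetween (fun s => max √(r ^ 2 - s ^ 2) (d - √(r ^ 2 - s ^ 2)))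
      (fun s => d + √(r ^ 2 - s ^ 2)) (Icc (-c) c) ⊆ crescent d r := by
  rintro ⟨s, t⟩ ⟨⟨hs₁, hs₂⟩, hlow, hup⟩
  have hsq : √(r ^ 2 - s ^ 2) ^ 2 = r ^ 2 - s ^ 2 := sq_sqrt (by nlinarith)
  have h₁ : √(r ^ 2 - s ^ 2) < t := (le_max_left _ _).trans_lt hlow
  have h₂ : d - √(r ^ 2 - s ^ 2) < t := (le_max_right _ _).trans_lt hlow
  constructor <;> dsimp only at * <;> nlinarith [sqrt_nonneg (r ^ 2 - s ^ 2)]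

theorem ofReal_mul_le_volume_crescent {d r : ℝ} (hd : 0 ≤ d) (hdr : d ≤ 2 * r) :
    ENNReal.ofReal (d * r) ≤ volume (crescent d r) := by
  set f : ℝ → ℝ := fun s => √(r ^ 2 - s ^ 2)
  have hsqrt2 : 1 ≤ √2 := one_le_sqrt.mpr one_le_two
  have hr : 0 ≤ r := by linarith
  set c := r / √2
  have hc : 0 ≤ c ∧ c ≤ r := ⟨by positivity, div_le_self (by linarith) hsqrt2⟩
  have hcf : ∀ s ∈ Icc (-c) c, c ≤ f s := fun s hs => by
    have hc2 : c ^ 2 = r ^ 2 / 2 := by rw [div_pow, sq_sqrt zero_le_two]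
    have hs2 : s ^ 2 ≤ c ^ 2 := sq_le_sq' hs.1 hs.2
    exact (le_sqrt hc.1 (by nlinarith)).mpr (by nlinarith)
  have hslice : ∀ s ∈ Icc (-c) c, d / √2 ≤ d + f s - max (f s) (d - f s) := fun s hs => by
    have : d / √2 ≤ 2 * c := by rw [mul_div_assoc']; gcongr
    exact le_sub_comm.mp <|
      max_le (by linarith [div_le_self hd hsqrt2]) (by linarith [hcf s hs])
  calc ENNReal.ofReal (d * r)
      = ENNReal.ofReal (∫ _ in Icc (-c) c, d / √2) := by
        rw [setIntegral_const, volume_real_Icc_of_le (by linarith), smul_eq_mul]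
        congr 1
        simp only [c]
        field_simp
        rw [sq_sqrt zero_le_two]
        ring
    _ ≤ ENNReal.ofReal (∫ s in Icc (-c) c, d + f s - max (f s) (d - f s)) :=
        ENNReal.ofReal_le_ofReal <| setIntegral_mono_on (integrableOn_const measure_Icc_lt_top.ne)
          (Continuous.integrableOn_Icc (by fun_prop)) measurableSet_Icc hslice
    _ = volume (regionBetween (fun s => max (f s) (d - f s)) (fun s => d + f s) (Icc (-c) c)) := by
        rw [Measure.volume_eq_prod, volume_regionBetween_eq_integral
          (Continuous.integrableOn_Icc (by fun_prop)) (Continuous.integrableOn_Icc (by fun_prop))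
          measurableSet_Icc fun s hs => max_le (by linarith) (by linarith [hc.1.trans (hcf s hs)])]
        rfl
    _ ≤ volume (crescent d r) := measure_mono (regionBetween_subset_crescent d hc.2)

/-- For `x, y ∈ ℝ²` with `d := ‖x − y‖ ≤ 2r` one has
`d r ≤ area(B(x;r) \ B(y;r)) ≤ 4 d r`. -/
theorem area_ball_diff_ball_bounds
    (r : ℝ) (hr : 0 < r) (x y : EuclideanSpace ℝ (Fin 2))
    (hd : dist x y ≤ 2 * r) :
    ENNReal.ofReal (dist x y * r) ≤ volume (closedBall x r \ closedBall y r) ∧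
      volume (closedBall x r \ closedBall y r) ≤ ENNReal.ofReal (4 * dist x y * r) := by
  have hdist : dist !₂[0, dist x y] 0 = dist x y := by
    simp [EuclideanSpace.norm_eq, Fin.sum_univ_two]
  rw [volume_closedBall_diff_closedBall_congr hdist.symm,
    volume_closedBall_diff_closedBall_zero_eq_volume_crescent hr.le]
  exact ⟨ofReal_mul_le_volume_crescent dist_nonneg hd, volume_crescent_le dist_nonneg hr.le⟩
end

section
/- Suppose 0 < r < 1/2 and x = (h, x₂) ∈ ℝ² with 0 ≤ h < r and r < x₂ < 1 − r. Then (π/2) r² + h r ≤ area(B(x; r) ∩ [0,1]²) ≤ (π/2) r² + 2 h r. -/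
open Metric Real MeasureTheory

/-- The unit square `[0,1]²` in the Euclidean plane. -/
def unitSquare : Set (EuclideanSpace ℝ (Fin 2)) :=
  {p | p 0 ∈ Set.Icc (0 : ℝ) 1 ∧ p 1 ∈ Set.Icc (0 : ℝ) 1}

/-!
Under the hypotheses the disk `B(x; r)` meets the boundary of the square only along the left side,
so the area is that of the half disk `{p 0 ≥ x 0}`, namely `π r² / 2`, plus that of the strip
`{0 ≤ p 0 < h}`. By Cavalieri the strip has area `∫₀ʰ 2 √(r² - (a - h)²) da`, and the chord
half-length `√(r² - t²)` lies between `r - t` and `r`, which gives `2rh - h² ≥ hr` from below and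
`2hr` from above.
-/

/-- The point reflection at the centre exchanges the two halves, which meet in a null hyperplane. -/
theorem addHaar_closedBall_inter_halfSpace {E : Type*} [NormedAddCommGroup E] [NormedSpace ℝ E]
    [MeasurableSpace E] [BorelSpace E] [FiniteDimensional ℝ E] (μ : Measure E)
    [μ.IsAddHaarMeasure] {L : E →L[ℝ] ℝ} (hL : L ≠ 0) (x : E) (r : ℝ) :
    μ (closedBall x r ∩ {p | L x ≤ L p}) = μ (closedBall x r) / 2 := by
  set U := closedBall x r ∩ {p | L x ≤ L p}
  set D := closedBall x r ∩ {p | L p ≤ L x}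
  have hU : MeasurableSet U :=
    measurableSet_closedBall.inter (measurableSet_le measurable_const L.measurable)
  have hreflect : (fun p => (x + x) - p) ⁻¹' U = D := by
    ext p
    simp only [U, D, Set.mem_preimage, Set.mem_inter_iff, mem_closedBall, Set.mem_ofPred_eq,
      map_sub, map_add, dist_eq_norm]
    rw [show x + x - p - x = -(p - x) by abel, norm_neg]
    constructor <;> rintro ⟨h1, h2⟩ <;> exact ⟨h1, by linarith⟩
  have hUD : μ U = μ D := by
    rw [← hreflect, (Measure.measurePreserving_sub_left μ (x + x)).measure_preimage
      hU.nullMeasurableSet]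
  have hunion : U ∪ D = closedBall x r := by
    rw [← Set.inter_union_distrib_left, ← Set.ofPred_or]
    simp [le_total]
  have hcap : μ (U ∩ D) = 0 := by
    refine measure_mono_null (t := (· + -x) ⁻¹' (LinearMap.ker (L : E →ₗ[ℝ] ℝ) : Set E)) ?_ ?_
    · rintro p ⟨⟨-, h1 : L x ≤ L p⟩, -, h2 : L p ≤ L x⟩
      simp [← sub_eq_add_neg, le_antisymm h2 h1]
    · rw [measure_preimage_add_right]
      exact Measure.addHaar_submodule μ _
        (LinearMap.ker_eq_top.not.mpr (ContinuousLinearMap.coe_injective.ne hL))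
  rw [ENNReal.eq_div_iff two_ne_zero ENNReal.ofNat_ne_top, two_mul]
  nth_rewrite 2 [hUD]
  rw [← measure_union_add_inter' hU, hunion, hcap, add_zero]

lemma EuclideanSpace.volume_closedBall_inter_halfPlane (x : EuclideanSpace ℝ (Fin 2)) {r : ℝ}
    (hr : 0 ≤ r) : volume (closedBall x r ∩ {p | x 0 ≤ p 0}) = ENNReal.ofReal (π / 2 * r ^ 2) := by
  have hproj : (EuclideanSpace.proj (0 : Fin 2) : EuclideanSpace ℝ (Fin 2) →L[ℝ] ℝ) ≠ 0 :=
    fun h => by simpa using congr($h (EuclideanSpace.single 0 1))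
  calc _ = volume (closedBall x r) / 2 := addHaar_closedBall_inter_halfSpace volume hproj x r
    _ = _ := by
      rw [EuclideanSpace.volume_closedBall_fin_two, ← ENNReal.ofReal_pow hr,
        ← ENNReal.ofReal_mul (by positivity),
        ← ENNReal.ofReal_ofNat 2, ← ENNReal.ofReal_div_of_pos two_pos]
      ring_nf

lemma volume_setOf_sub_sq_le (c s : ℝ) :
    volume {b : ℝ | (b - c) ^ 2 ≤ s} = ENNReal.ofReal (2 * √s) := by
  rcases lt_or_ge s 0 with hs | hs
  · have : {b : ℝ | (b - c) ^ 2 ≤ s} = ∅ :=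
      Set.eq_empty_of_forall_notMem fun b hb => (sq_nonneg (b - c)).not_gt (hb.trans_lt hs)
    rw [this, measure_empty, sqrt_eq_zero'.mpr hs.le, mul_zero, ENNReal.ofReal_zero]
  · have : {b : ℝ | (b - c) ^ 2 ≤ s} = Set.Icc (c - √s) (c + √s) := by
      ext b
      simp only [Set.mem_ofPred_eq, Set.mem_Icc, Real.sq_le hs]
      constructor <;> rintro ⟨h1, h2⟩ <;> constructor <;> linarith
    rw [this, Real.volume_Icc]
    ring_nf

lemma EuclideanSpace.mem_closedBall_iff_sum_sq {ι : Type*} [Fintype ι] {x p : EuclideanSpace ℝ ι}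
    {r : ℝ} (hr : 0 ≤ r) : p ∈ closedBall x r ↔ ∑ i, (p i - x i) ^ 2 ≤ r ^ 2 := by
  rw [mem_closedBall, EuclideanSpace.dist_eq, Real.sqrt_le_iff]
  simp [hr, Real.dist_eq, sq_abs]

lemma EuclideanSpace.abs_sub_le_of_mem_closedBall {ι : Type*} [Fintype ι]
    {x p : EuclideanSpace ℝ ι} {r : ℝ} (hp : p ∈ closedBall x r) (i : ι) : |p i - x i| ≤ r :=
  calc |p i - x i| = ‖(p - x) i‖ := rfl
    _ ≤ ‖p - x‖ := PiLp.norm_apply_le _ i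
    _ ≤ r := by rwa [← dist_eq_norm]

lemma EuclideanSpace.measurePreserving_finTwo_prod :
    MeasurePreserving (fun p : EuclideanSpace ℝ (Fin 2) => (p 0, p 1)) :=
  (volume_preserving_finTwoArrow ℝ).comp (PiLp.volume_preserving_ofLp (Fin 2))

lemma EuclideanSpace.volume_closedBall_inter_apply_zero_mem (x : EuclideanSpace ℝ (Fin 2)) {r : ℝ}
    (hr : 0 ≤ r) {s : Set ℝ} (hs : MeasurableSet s) :
    volume (closedBall x r ∩ {p | p 0 ∈ s})
      = ∫⁻ a in s, ENNReal.ofReal (2 * √(r ^ 2 - (a - x 0) ^ 2)) := by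
  set T := {q : ℝ × ℝ | q.1 ∈ s ∧ (q.2 - x 1) ^ 2 ≤ r ^ 2 - (q.1 - x 0) ^ 2}
  have hT : MeasurableSet T :=
    (measurable_fst hs).inter (measurableSet_le (f := fun q : ℝ × ℝ => (q.2 - x 1) ^ 2)
      (by fun_prop) (by fun_prop))
  have hpre : closedBall x r ∩ {p | p 0 ∈ s} = (fun p => (p 0, p 1)) ⁻¹' T := by
    ext p
    simp only [Set.mem_inter_iff, EuclideanSpace.mem_closedBall_iff_sum_sq hr, Fin.sum_univ_two,
      Set.mem_preimage, Set.mem_ofPred_eq, T, le_sub_iff_add_le', and_comm]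
  have hslice (a : ℝ) : volume (Prod.mk a ⁻¹' T)
      = s.indicator (fun a => ENNReal.ofReal (2 * √(r ^ 2 - (a - x 0) ^ 2))) a := by
    by_cases ha : a ∈ s
    · simp [T, ha, volume_setOf_sub_sq_le]
    · simp [T, ha]
  rw [hpre, EuclideanSpace.measurePreserving_finTwo_prod.measure_preimage hT.nullMeasurableSet,
    Measure.volume_eq_prod, Measure.prod_apply hT, lintegral_congr hslice, lintegral_indicator hs]

lemma sub_le_sqrt_sq_sub_sq {r t : ℝ} (ht : 0 ≤ t) (htr : t ≤ r) : r - t ≤ √(r ^ 2 - t ^ 2) :=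
  Real.le_sqrt_of_sq_le (by nlinarith)

lemma lintegral_Ico_two_mul_sub_add {h r : ℝ} (hh : 0 ≤ h) (hhr : h ≤ r) :
    ∫⁻ a in Set.Ico 0 h, ENNReal.ofReal (2 * (r - h + a)) = ENNReal.ofReal (2 * r * h - h ^ 2) := by
  rw [← ofReal_integral_eq_lintegral_ofReal, integral_Ico_eq_integral_Ioc,
    ← intervalIntegral.integral_of_le hh]
  · rw [intervalIntegral.integral_const_mul, intervalIntegral.integral_add intervalIntegrable_const
      intervalIntegral.intervalIntegrable_id, intervalIntegral.integral_const, integral_id,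
      smul_eq_mul]
    ring_nf
  · exact (Continuous.integrableOn_Icc (by fun_prop)).mono_set Set.Ico_subset_Icc_self
  · exact (ae_restrict_iff' measurableSet_Ico).mpr (.of_forall fun a ha => by
      simp only [Pi.zero_apply]; linarith [ha.1])

lemma ofReal_mul_le_lintegral_Ico_chord {h r : ℝ} (hh : 0 ≤ h) (hhr : h ≤ r) :
    ENNReal.ofReal (h * r) ≤ ∫⁻ a in Set.Ico 0 h, ENNReal.ofReal (2 * √(r ^ 2 - (a - h) ^ 2)) :=
  calc ENNReal.ofReal (h * r) ≤ ENNReal.ofReal (2 * r * h - h ^ 2) :=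
        ENNReal.ofReal_le_ofReal (by nlinarith)
    _ = ∫⁻ a in Set.Ico 0 h, ENNReal.ofReal (2 * (r - h + a)) :=
        (lintegral_Ico_two_mul_sub_add hh hhr).symm
    _ ≤ _ := setLIntegral_mono (by fun_prop) fun a ha => by
        have := sub_le_sqrt_sq_sub_sq (sub_nonneg.mpr ha.2.le) (by linarith [ha.1] : h - a ≤ r)
        rw [show (a - h) ^ 2 = (h - a) ^ 2 by ring]
        gcongr
        linarith

lemma lintegral_Ico_chord_le (h : ℝ) {r : ℝ} (hr : 0 ≤ r) :
    ∫⁻ a in Set.Ico 0 h, ENNReal.ofReal (2 * √(r ^ 2 - (a - h) ^ 2)) ≤ ENNReal.ofReal (2 * h * r) :=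
  calc _ ≤ ∫⁻ _ in Set.Ico 0 h, ENNReal.ofReal (2 * r) := lintegral_mono fun a => by
        gcongr
        exact (Real.sqrt_le_left hr).mpr (by nlinarith)
    _ = ENNReal.ofReal (2 * h * r) := by
        rw [setLIntegral_const, Real.volume_Ico, sub_zero, ← ENNReal.ofReal_mul (by positivity)]
        ring_nf

lemma closedBall_inter_unitSquare_eq_union {x : EuclideanSpace ℝ (Fin 2)} {r : ℝ}
    (h0 : 0 ≤ x 0) (h0r : x 0 + r ≤ 1) (h1l : r ≤ x 1) (h1u : x 1 + r ≤ 1) :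
    closedBall x r ∩ unitSquare
      = closedBall x r ∩ {p | x 0 ≤ p 0} ∪ closedBall x r ∩ {p | p 0 ∈ Set.Ico 0 (x 0)} := by
  rw [← Set.inter_union_distrib_left]
  ext p
  simp only [Set.mem_inter_iff, Set.mem_union, unitSquare, Set.mem_ofPred_eq, Set.mem_Icc,
    Set.mem_Ico]
  refine ⟨fun ⟨hp, ⟨hp0, _⟩, _⟩ => ⟨hp, (le_or_gt (x 0) (p 0)).imp id fun hlt => ⟨hp0, hlt⟩⟩, ?_⟩
  rintro ⟨hp, hstrip⟩
  have hp0 : 0 ≤ p 0 := hstrip.elim h0.trans And.left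
  have := abs_le.mp (EuclideanSpace.abs_sub_le_of_mem_closedBall hp 0)
  have := abs_le.mp (EuclideanSpace.abs_sub_le_of_mem_closedBall hp 1)
  exact ⟨hp, ⟨hp0, by linarith⟩, by linarith, by linarith⟩

theorem area_ball_inter_unitSquare_bounds_general
    (r : ℝ) (hr0 : 0 < r) (x : EuclideanSpace ℝ (Fin 2))
    (hh0 : 0 ≤ x 0) (hhr : x 0 < r) (hx2l : r < x 1) (hx2u : x 1 < 1 - r) :
    ENNReal.ofReal (π / 2 * r ^ 2 + x 0 * r) ≤ volume (closedBall x r ∩ unitSquare) ∧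
      volume (closedBall x r ∩ unitSquare) ≤ ENNReal.ofReal (π / 2 * r ^ 2 + 2 * x 0 * r) := by
  have hvol : volume (closedBall x r ∩ unitSquare) = ENNReal.ofReal (π / 2 * r ^ 2)
      + ∫⁻ a in Set.Ico 0 (x 0), ENNReal.ofReal (2 * √(r ^ 2 - (a - x 0) ^ 2)) := by
    have hstrip : MeasurableSet (closedBall x r ∩ {p | p 0 ∈ Set.Ico 0 (x 0)}) :=
      measurableSet_closedBall.inter (measurableSet_Ico.preimage (by fun_prop))
    rw [closedBall_inter_unitSquare_eq_union hh0 (by linarith) hx2l.le (by linarith),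
      measure_union _ hstrip, EuclideanSpace.volume_closedBall_inter_halfPlane x hr0.le,
      EuclideanSpace.volume_closedBall_inter_apply_zero_mem x hr0.le measurableSet_Ico]
    exact Set.disjoint_left.mpr fun p ⟨_, hle⟩ ⟨_, _, hlt⟩ => (not_le.mpr hlt) hle
  rw [hvol, ENNReal.ofReal_add (by positivity) (by positivity),
    ENNReal.ofReal_add (by positivity) (by positivity)]
  exact ⟨by gcongr; exact ofReal_mul_le_lintegral_Ico_chord hh0 hhr.le,
    by gcongr; exact lintegral_Ico_chord_le _ hr0.le⟩

/-- For `0 < r < 1/2` and `x = (h, x₂)` with `0 ≤ h < r` and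
`r < x₂ < 1 − r`, one has `(π/2) r² + h r ≤ area(B(x;r) ∩ [0,1]²) ≤ (π/2) r² + 2 h r`. -/
theorem area_ball_inter_unitSquare_bounds
    (r : ℝ) (hr0 : 0 < r) (hr : r < 1 / 2) (x : EuclideanSpace ℝ (Fin 2))
    (hh0 : 0 ≤ x 0) (hhr : x 0 < r) (hx2l : r < x 1) (hx2u : x 1 < 1 - r) :
    ENNReal.ofReal (π / 2 * r ^ 2 + x 0 * r) ≤ volume (closedBall x r ∩ unitSquare) ∧
      volume (closedBall x r ∩ unitSquare) ≤ ENNReal.ofReal (π / 2 * r ^ 2 + 2 * x 0 * r) :=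
  area_ball_inter_unitSquare_bounds_general r hr0 x hh0 hhr hx2l hx2u
end

section
/- For every natural number ℓ there exists a natural number s = s(ℓ) such that the following holds. Let G be a simple graph, let C be an s-blob cycle in G, and let v be a vertex of G not on C having at least |V(C)|/2 − ℓ neighbours (in G) among the vertices of C. Then there exist s' ≥ s − 2 and an s'-blob cycle C' in G with vertex set V(C') = {v} ∪ V(C) whose blob is contained in the blob of C. -/
universe u

/-- An `s`-blob cycle in a simple graph `G`: a cyclic sequence of `m ≥ 3`
distinct vertices, consecutive ones adjacent in `G`, whose first `s`
vertices are pairwise adjacent in `G` (the *blob*). -/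
structure BlobCycle {V : Type u} (G : SimpleGraph V) (s : ℕ) where
  m : ℕ
  three_le_m : 3 ≤ m
  s_le_m : s ≤ m
  one_le_s : 1 ≤ s
  f : ZMod m → V
  inj : Function.Injective f
  adj_succ : ∀ i : ZMod m, G.Adj (f i) (f (i + 1))
  adj_blob : ∀ i j : ZMod m, i.val < s → j.val < s → i ≠ j → G.Adj (f i) (f j)

/-- The vertex set of a blob cycle. -/
def BlobCycle.verts {V : Type u} {G : SimpleGraph V} {s : ℕ} (C : BlobCycle G s) : Set V :=
  Set.range C.f

/-- The blob of a blob cycle. -/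
def BlobCycle.blob {V : Type u} {G : SimpleGraph V} {s : ℕ} (C : BlobCycle G s) : Set V :=
  C.f '' {i | i.val < s}

/-- `x` and `y` are consecutive vertices (an edge) of the blob cycle. -/
def BlobCycle.IsEdge {V : Type u} {G : SimpleGraph V} {s : ℕ} (C : BlobCycle G s)
    (x y : V) : Prop :=
  ∃ i : ZMod C.m, (C.f i = x ∧ C.f (i + 1) = y) ∨ (C.f i = y ∧ C.f (i + 1) = x)

/-!
Write `C` as `u₀, …, u_{m-1}` with blob `u₀, …, u_{s-1}`. If `v` is adjacent to consecutive
vertices `u_k, u_{k+1}` with `k ≥ s - 1`, inserting `v` between them leaves the blob intact. If `v`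
is adjacent to two inner blob vertices `u_p, u_q` (`0 < p < q < s - 1`), permute the inner blob
vertices so that these two sit at positions `s - 3, s - 2` and insert `v` between them, keeping a
blob of size `s - 2`. Otherwise `v` has at most one inner blob neighbour besides possibly `u₀`, and
no two consecutive neighbours among `u_{s-1}, …, u_{m-1}`, hence at most `2 + (m - s + 2) / 2`
neighbours on `C`, fewer than `m / 2 - ℓ` once `s = 2ℓ + 7`.
-/

open Set SimpleGraph

section

variable {V : Type u} {G : SimpleGraph V}

/-- A cycle `g 0, …, g (m - 1)` of `G`; indexing by `ℕ` rather than `ZMod m` turns the cycle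
surgery below into linear arithmetic on indices. -/
structure SimpleGraph.IsCyclicSeq (G : SimpleGraph V) (m : ℕ) (g : ℕ → V) : Prop where
  three_le : 3 ≤ m
  injOn : InjOn g (Iio m)
  adj_succ : ∀ k, k + 1 < m → G.Adj (g k) (g (k + 1))
  adj_last_first : G.Adj (g (m - 1)) (g 0)

namespace BlobCycle

variable {s : ℕ} (C : BlobCycle G s)

def seq : ℕ → V := fun k => C.f k

instance : NeZero C.m := ⟨by have := C.three_le_m; omega⟩

theorem isCyclicSeq : G.IsCyclicSeq C.m C.seq where
  three_le := C.three_le_m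
  injOn a ha b hb h := by
    have := congrArg ZMod.val (C.inj h)
    rwa [ZMod.val_cast_of_lt ha, ZMod.val_cast_of_lt hb] at this
  adj_succ k _ := by simpa [seq] using C.adj_succ k
  adj_last_first := by
    have := C.adj_succ ((C.m - 1 : ℕ) : ZMod C.m)
    rwa [← Nat.cast_succ, Nat.succ_eq_add_one, Nat.sub_add_cancel (by have := C.three_le_m; omega),
      ZMod.natCast_self, ← Nat.cast_zero] at this

theorem image_seq_Iio {t : ℕ} (ht : t ≤ C.m) : C.seq '' Iio t = C.f '' {i | i.val < t} := by
  ext x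
  constructor
  · rintro ⟨k, hk, rfl⟩
    exact ⟨k, by simpa [ZMod.val_cast_of_lt (lt_of_lt_of_le hk ht)] using hk, rfl⟩
  · rintro ⟨i, hi, rfl⟩
    exact ⟨i.val, hi, by simp [seq]⟩

theorem verts_eq_image_seq : C.verts = C.seq '' Iio C.m := by
  rw [C.image_seq_Iio le_rfl]
  ext x
  simp [verts, ZMod.val_lt]

theorem blob_eq_image_seq : C.blob = C.seq '' Iio s :=
  (C.image_seq_Iio C.s_le_m).symm

theorem isClique_blob : G.IsClique C.blob := by
  rintro _ ⟨i, hi, rfl⟩ _ ⟨j, hj, rfl⟩ hne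
  exact C.adj_blob i j hi hj fun h => hne (congrArg C.f h)

end BlobCycle

def insertAfter (g : ℕ → V) (k : ℕ) (v : V) : ℕ → V :=
  fun j => if j ≤ k then g j else if j = k + 1 then v else g (j - 1)

theorem image_insertAfter_Iio_of_le {g : ℕ → V} {k t : ℕ} (v : V) (ht : t ≤ k + 1) :
    insertAfter g k v '' Iio t = g '' Iio t :=
  image_congr fun j hj => if_pos (by rw [mem_Iio] at hj; omega)

theorem image_insertAfter_Iio_succ {g : ℕ → V} {k m : ℕ} (v : V) (hk : k < m) :
    insertAfter g k v '' Iio (m + 1) = insert v (g '' Iio m) := by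
  ext x
  simp only [mem_image, mem_Iio, mem_insert_iff, insertAfter]
  constructor
  · rintro ⟨j, hj, rfl⟩
    split_ifs
    · exact Or.inr ⟨j, by omega, rfl⟩
    · exact Or.inl rfl
    · exact Or.inr ⟨j - 1, by omega, rfl⟩
  · rintro (rfl | ⟨j, hj, rfl⟩)
    · exact ⟨k + 1, by omega, by simp⟩
    · by_cases hjk : j ≤ k
      · exact ⟨j, by omega, if_pos hjk⟩
      · exact ⟨j + 1, by omega, by simp [show ¬ j + 1 ≤ k by omega, show j ≠ k by omega]⟩

namespace Equiv.Perm

variable {σ : Equiv.Perm ℕ} {n t : ℕ}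

theorem apply_lt_iff_of_forall_le (hσ : ∀ k, n ≤ k → σ k = k) (ht : n ≤ t) (k : ℕ) :
    σ k < t ↔ k < t := by
  constructor
  · intro h
    by_contra hk
    rw [hσ k (by omega)] at h
    omega
  · intro hk
    by_contra h
    have := σ.injective (hσ (σ k) (by omega))
    omega

theorem image_Iio_of_forall_le (hσ : ∀ k, n ≤ k → σ k = k) (ht : n ≤ t) :
    σ '' Iio t = Iio t := by
  ext x
  rw [Equiv.image_eq_preimage_symm, mem_preimage, mem_Iio, mem_Iio,
    ← apply_lt_iff_of_forall_le hσ ht, apply_symm_apply]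

end Equiv.Perm

namespace SimpleGraph.IsCyclicSeq

variable {m s k : ℕ} {g : ℕ → V} {v : V}

theorem exists_blobCycle (hg : G.IsCyclicSeq m g) (hs : 1 ≤ s) (hsm : s ≤ m)
    (hK : G.IsClique (g '' Iio s)) :
    ∃ C : BlobCycle G s, C.verts = g '' Iio m ∧ C.blob = g '' Iio s := by
  have : NeZero m := ⟨by have := hg.three_le; omega⟩
  have hinj {i j : ZMod m} (h : g i.val = g j.val) : i = j :=
    ZMod.val_injective m (hg.injOn (ZMod.val_lt i) (ZMod.val_lt j) h)
  have himage {t : ℕ} (ht : t ≤ m) :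
      (fun i : ZMod m => g i.val) '' {i | i.val < t} = g '' Iio t := by
    ext x
    constructor
    · rintro ⟨i, hi, rfl⟩
      exact ⟨i.val, hi, rfl⟩
    · rintro ⟨k, hk, rfl⟩
      exact ⟨k, by simpa [ZMod.val_cast_of_lt (lt_of_lt_of_le hk ht)] using hk,
        by simp [ZMod.val_cast_of_lt (lt_of_lt_of_le hk ht)]⟩
  refine ⟨⟨m, hg.three_le, hsm, hs, fun i => g i.val, fun i j h => hinj h, fun i => ?_,
    fun i j hi hj hij => hK ⟨_, hi, rfl⟩ ⟨_, hj, rfl⟩ fun h => hij (hinj h)⟩, ?_, himage hsm⟩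
  · obtain ⟨k, hk, rfl⟩ : ∃ k < m, (k : ZMod m) = i := ⟨i.val, ZMod.val_lt i, by simp⟩
    rw [← Nat.cast_succ, ZMod.val_natCast, ZMod.val_natCast, Nat.mod_eq_of_lt hk]
    rcases (Nat.succ_le_of_lt hk).lt_or_eq with hk' | hk'
    · rw [Nat.mod_eq_of_lt hk']
      exact hg.adj_succ k hk'
    · rw [hk', Nat.mod_self, show k = m - 1 by omega]
      exact hg.adj_last_first
  · rw [← himage le_rfl]
    ext x
    simp [BlobCycle.verts, ZMod.val_lt]

theorem insertAfter (hg : G.IsCyclicSeq m g) (hk : k + 1 < m)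
    (hv : v ∉ g '' Iio m) (h₁ : G.Adj (g k) v) (h₂ : G.Adj v (g (k + 1))) :
    G.IsCyclicSeq (m + 1) (insertAfter g k v) where
  three_le := by have := hg.three_le; omega
  injOn a ha b hb hab := by
    have hv' : ∀ j < m, g j ≠ v := fun j hj h => hv ⟨j, hj, h⟩
    rw [mem_Iio] at ha hb
    simp only [_root_.insertAfter] at hab
    split_ifs at hab <;> first
      | omega
      | exact absurd hab (hv' _ (by omega))
      | exact absurd hab.symm (hv' _ (by omega))
      | have := hg.injOn (by rw [mem_Iio]; omega) (by rw [mem_Iio]; omega) hab; omega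
  adj_succ j hj := by
    simp only [_root_.insertAfter]
    split_ifs <;> first
      | omega
      | (obtain rfl : j = k := by omega); exact h₁
      | exact hg.adj_succ j (by omega)
      | (obtain rfl : j = k + 1 := by omega); simpa using h₂
      | simpa [show j + 1 - 1 = j - 1 + 1 by omega] using hg.adj_succ (j - 1) (by omega)
  adj_last_first := by
    simpa [_root_.insertAfter, show ¬ m ≤ k by omega, show m ≠ k + 1 by omega]
      using hg.adj_last_first

theorem comp_perm (hg : G.IsCyclicSeq m g) (hsm : s ≤ m) (hK : G.IsClique (g '' Iio s))
    {σ : Equiv.Perm ℕ} (hσ : ∀ k, k = 0 ∨ s - 1 ≤ k → σ k = k) :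
    G.IsCyclicSeq m (g ∘ σ) where
  three_le := hg.three_le
  injOn := hg.injOn.comp σ.injective.injOn fun k hk =>
    (σ.apply_lt_iff_of_forall_le (fun j hj => hσ j (.inr hj)) (by omega) k).2 hk
  adj_succ k hk := by
    by_cases hks : k + 1 < s
    · have hlt (j : ℕ) (hj : j < s) : σ j < s :=
        (σ.apply_lt_iff_of_forall_le (fun j hj => hσ j (.inr hj)) (by omega) j).2 hj
      have hk₀ := hlt k (by omega)
      have hk₁ := hlt (k + 1) hks
      refine hK (mem_image_of_mem g hk₀) (mem_image_of_mem g hk₁) fun h => ?_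
      have := σ.injective (hg.injOn (mem_Iio.2 (by omega)) (mem_Iio.2 (by omega)) h)
      omega
    · simpa [hσ k (.inr (by omega)), hσ (k + 1) (.inr (by omega))] using hg.adj_succ k hk
  adj_last_first := by
    simpa [hσ 0 (.inl rfl), hσ (m - 1) (.inr (by omega))] using hg.adj_last_first

theorem exists_blobCycle_insertAfter (hg : G.IsCyclicSeq m g) (hK : G.IsClique (g '' Iio s))
    (hs : 1 ≤ s) (hsk : s ≤ k + 1) (hk : k + 1 < m) (hv : v ∉ g '' Iio m)
    (h₁ : G.Adj (g k) v) (h₂ : G.Adj v (g (k + 1))) :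
    ∃ C : BlobCycle G s, C.verts = insert v (g '' Iio m) ∧ C.blob = g '' Iio s := by
  rw [← image_insertAfter_Iio_succ v (by omega : k < m), ← image_insertAfter_Iio_of_le v hsk]
  rw [← image_insertAfter_Iio_of_le v hsk] at hK
  exact (hg.insertAfter hk hv h₁ h₂).exists_blobCycle hs (by omega) hK

theorem exists_blobCycle_insert_of_adj_interior (hg : G.IsCyclicSeq m g) (hsm : s ≤ m)
    (hK : G.IsClique (g '' Iio s)) (hv : v ∉ g '' Iio m) {p q : ℕ} (hp : 1 ≤ p) (hpq : p < q)
    (hqs : q + 2 ≤ s) (h₁ : G.Adj v (g p)) (h₂ : G.Adj v (g q)) :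
    ∃ C : BlobCycle G (s - 2), C.verts = insert v (g '' Iio m) ∧ C.blob ⊆ g '' Iio s := by
  set σ : Equiv.Perm ℕ := Equiv.swap q (s - 2) * Equiv.swap p (s - 3)
  have hσ (j : ℕ) (hj : j = 0 ∨ s - 1 ≤ j) : σ j = j := by
    simp only [σ, Equiv.Perm.mul_apply, Equiv.swap_apply_def]
    split_ifs <;> omega
  have hσpq : σ (s - 3) = p ∧ σ (s - 2) = q := by
    simp only [σ, Equiv.Perm.mul_apply, Equiv.swap_apply_def]
    constructor <;> split_ifs <;> omega
  have himage {t : ℕ} (ht : s - 1 ≤ t) : (g ∘ σ) '' Iio t = g '' Iio t := by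
    rw [image_comp, σ.image_Iio_of_forall_le (fun j hj => hσ j (.inr hj)) ht]
  have hblob : (g ∘ σ) '' Iio (s - 2) ⊆ g '' Iio s :=
    himage (t := s) (by omega) ▸ image_mono (Iio_subset_Iio (by omega))
  obtain ⟨C, hCv, hCb⟩ := (hg.comp_perm hsm hK hσ).exists_blobCycle_insertAfter
    (hK.subset hblob) (by omega) (k := s - 3) (by omega) (by omega)
    (by rwa [himage (by omega)]) (by simpa [hσpq.1] using h₁.symm)
    (by simpa [show s - 3 + 1 = s - 2 by omega, hσpq.2] using h₂)
  exact ⟨C, by rw [hCv, himage (by omega)], hCb ▸ hblob⟩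

end SimpleGraph.IsCyclicSeq

theorem Finset.two_mul_card_le_of_forall_succ_notMem {S : Finset ℕ} {a b : ℕ}
    (hS : S ⊆ Ico a b) (h : ∀ k ∈ S, k + 1 ∉ S) : 2 * S.card ≤ b - a + 1 := by
  have := card_le_card_of_injOn (fun k => (k - a) / 2)
    (s := S) (t := range ((b - a + 1) / 2)) (fun k hk => ?_) (fun i hi j hj hij => ?_)
  · simp only [card_range] at this
    omega
  · have := mem_Ico.1 (hS hk)
    simp only [coe_range, Set.mem_Iio]
    omega
  · have hi' := mem_Ico.1 (hS hi)
    have hj' := mem_Ico.1 (hS hj)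
    simp only at hij
    by_contra hne
    rcases Nat.lt_or_gt_of_ne hne with hlt | hlt
    · exact h i hi (by rwa [show i + 1 = j by omega])
    · exact h j hj (by rwa [show j + 1 = i by omega])

theorem two_mul_card_filter_range_le (P : ℕ → Prop) [DecidablePred P] {m s : ℕ}
    (hinner : ∀ p q, 1 ≤ p → p < q → q + 2 ≤ s → P p → ¬ P q)
    (hpath : ∀ k, s - 1 ≤ k → k + 1 < m → P k → ¬ P (k + 1)) :
    2 * ((Finset.range m).filter P).card ≤ m - s + 6 := by
  have hsplit : (Finset.range m).filter P ⊆
      {0} ∪ ((Finset.Ico 1 (s - 1)).filter P ∪ (Finset.Ico (s - 1) m).filter P) := by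
    intro k hk
    simp only [Finset.mem_filter, Finset.mem_range] at hk
    simp only [Finset.mem_union, Finset.mem_singleton, Finset.mem_filter, Finset.mem_Ico]
    rcases Nat.lt_or_ge k 1 with h₀ | h₀
    · exact Or.inl (by omega)
    · rcases Nat.lt_or_ge k (s - 1) with h₁ | h₁
      · exact Or.inr (Or.inl ⟨⟨h₀, h₁⟩, hk.2⟩)
      · exact Or.inr (Or.inr ⟨⟨h₁, hk.1⟩, hk.2⟩)
  have hcard_inner : ((Finset.Ico 1 (s - 1)).filter P).card ≤ 1 := by
    refine Finset.card_le_one.2 fun p hp q hq => ?_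
    simp only [Finset.mem_filter, Finset.mem_Ico] at hp hq
    by_contra hne
    rcases Nat.lt_or_gt_of_ne hne with hlt | hlt
    · exact hinner p q hp.1.1 hlt (by omega) hp.2 hq.2
    · exact hinner q p hq.1.1 hlt (by omega) hq.2 hp.2
  have hcard_path : 2 * ((Finset.Ico (s - 1) m).filter P).card ≤ m - (s - 1) + 1 :=
    Finset.two_mul_card_le_of_forall_succ_notMem (Finset.filter_subset _ _) fun k hk hk1 => by
      simp only [Finset.mem_filter, Finset.mem_Ico] at hk hk1
      exact hpath k hk.1.1 hk1.1.2 hk.2 hk1.2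
  have := (Finset.card_le_card hsplit).trans <| (Finset.card_union_le _ _).trans <|
    add_le_add (Finset.card_singleton 0).le (Finset.card_union_le _ _)
  omega

theorem SimpleGraph.ncard_neighborSet_inter_image [DecidableRel G.Adj] {g : ℕ → V} {m : ℕ}
    (hg : InjOn g (Iio m)) (v : V) :
    (G.neighborSet v ∩ g '' Iio m).ncard =
      ((Finset.range m).filter fun k => G.Adj v (g k)).card := by
  have : G.neighborSet v ∩ g '' Iio m = g '' ↑((Finset.range m).filter fun k => G.Adj v (g k)) := by
    ext x
    simp only [mem_inter_iff, mem_neighborSet, mem_image, mem_Iio, Finset.coe_filter,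
      Finset.mem_range]
    constructor
    · rintro ⟨hx, k, hk, rfl⟩
      exact ⟨k, ⟨hk, hx⟩, rfl⟩
    · rintro ⟨k, ⟨hk, hx⟩, rfl⟩
      exact ⟨hx, k, hk, rfl⟩
  rw [this, (hg.mono fun k hk => by simpa using (Finset.mem_filter.1 hk).1).ncard_image,
    ncard_coe_finset]

end

/-- For every `ℓ` there exists `s = s(ℓ)` such that: if `C` is an
`s`-blob cycle in a simple graph `G` and `v ∉ V(C)` has at least `|V(C)|/2 − ℓ`
neighbours on `C`, then there is an `s'`-blob cycle `C'` with `s' ≥ s − 2`, vertex set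
`{v} ∪ V(C)`, whose blob is contained in the blob of `C`. -/
theorem blobCycle_insert_vertex :
    ∀ ℓ : ℕ, ∃ s : ℕ, ∀ (V : Type u) (G : SimpleGraph V) (C : BlobCycle G s) (v : V),
      v ∉ C.verts →
      (C.m : ℝ) / 2 - ℓ ≤ ((G.neighborSet v ∩ C.verts).ncard : ℝ) →
      ∃ (s' : ℕ) (C' : BlobCycle G s'), s - 2 ≤ s' ∧
        C'.verts = {v} ∪ C.verts ∧ C'.blob ⊆ C.blob := by
  intro ℓ
  refine ⟨2 * ℓ + 7, fun V G C v hv hdeg => ?_⟩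
  classical
  have hg := C.isCyclicSeq
  have hK := C.blob_eq_image_seq ▸ C.isClique_blob
  rw [C.verts_eq_image_seq] at hv hdeg ⊢
  rw [C.blob_eq_image_seq, ← insert_eq]
  by_cases hI : ∃ k, 2 * ℓ + 7 - 1 ≤ k ∧ k + 1 < C.m ∧ G.Adj v (C.seq k) ∧ G.Adj v (C.seq (k + 1))
  · obtain ⟨k, hk, hkm, h₁, h₂⟩ := hI
    obtain ⟨C', hCv, hCb⟩ :=
      hg.exists_blobCycle_insertAfter hK C.one_le_s (by omega) hkm hv h₁.symm h₂
    exact ⟨_, C', by omega, hCv, hCb.le⟩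
  by_cases hII : ∃ p q, 1 ≤ p ∧ p < q ∧ q + 2 ≤ 2 * ℓ + 7 ∧ G.Adj v (C.seq p) ∧ G.Adj v (C.seq q)
  · obtain ⟨p, q, hp, hpq, hqs, h₁, h₂⟩ := hII
    obtain ⟨C', hCv, hCb⟩ :=
      hg.exists_blobCycle_insert_of_adj_interior C.s_le_m hK hv hp hpq hqs h₁ h₂
    exact ⟨_, C', le_rfl, hCv, hCb⟩
  simp only [not_exists, not_and] at hI hII
  have hcount := two_mul_card_filter_range_le _ hII hI
  rw [ncard_neighborSet_inter_image hg.injOn] at hdeg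
  have hm : 2 * ((Finset.range C.m).filter fun k => G.Adj v (C.seq k)).card + 2 * ℓ + 1 ≤ C.m := by
    have := C.s_le_m
    omega
  have := (Nat.cast_le (α := ℝ)).2 hm
  push_cast at this
  linarith
end
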